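/- arXiv:1806.02014 — 14 statements merged into one kernel-verified Lean document; each statement's English description precedes it below -/
import Mathlib

section
/- A function f : C → D between codes C ⊆ 2^[n] and D ⊆ 2^[m] is a morphism if and only if for every i ∈ [m], the preimage f⁻¹(Tk_D({i})) is a trunk in C. -/
def trunk {n : ℕ} (C : Set (Finset (Fin n))) (σ : Finset (Fin n)) : Set (Finset (Fin n)) :=
  {c | c ∈ C ∧ σ ⊆ c}

def IsTrunk {n : ℕ} (C T : Set (Finset (Fin n))) : Prop :=
  T = ∅ ∨ ∃ σ : Finset (Fin n), T = trunk C σ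

def IsMorphism {n m : ℕ} (C : Set (Finset (Fin n))) (D : Set (Finset (Fin m)))
    (f : Finset (Fin n) → Finset (Fin m)) : Prop :=
  (∀ c ∈ C, f c ∈ D) ∧
  ∀ T : Set (Finset (Fin m)), IsTrunk D T → IsTrunk C {c | c ∈ C ∧ f c ∈ T}

lemma isTrunk_inter {n : ℕ} {C A B : Set (Finset (Fin n))}
    (hA : IsTrunk C A) (hB : IsTrunk C B) : IsTrunk C (A ∩ B) := by
  rcases hA with rfl | ⟨σ, rfl⟩
  · left; simp
  rcases hB with rfl | ⟨τ, rfl⟩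
  · left; simp
  · right
    exact ⟨σ ∪ τ, by ext c; simp only [trunk, Set.mem_inter_iff, Set.mem_setOf_eq, Finset.union_subset_iff]; tauto⟩

theorem isMorphism_iff_simple_trunks {n m : ℕ} (C : Set (Finset (Fin n)))
    (D : Set (Finset (Fin m))) (f : Finset (Fin n) → Finset (Fin m))
    (hf : ∀ c ∈ C, f c ∈ D) :
    IsMorphism C D f ↔
      ∀ i : Fin m, IsTrunk C {c | c ∈ C ∧ f c ∈ trunk D {i}} := by
  constructor
  · intro h i
    exact h.2 _ (Or.inr ⟨{i}, rfl⟩)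
  · intro h
    refine ⟨hf, ?_⟩
    intro T hT
    rcases hT with rfl | ⟨σ, rfl⟩
    · left; ext c; simp
    · have key : ∀ σ : Finset (Fin m),
          IsTrunk C {c | c ∈ C ∧ f c ∈ trunk D σ} := by
        intro σ
        induction σ using Finset.induction with
        | empty =>
          right
          exact ⟨∅, by ext c; simp [trunk]; intro hc; exact hf c hc⟩
        | @insert a s hi ih =>
          have := isTrunk_inter (h a) ih
          convert this using 1
          ext c
          simp only [trunk, Set.mem_inter_iff, Set.mem_setOf_eq, Finset.insert_subset_iff, Finset.singleton_subset_iff]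
          have := hf c
          tauto
      exact key σ
end

section
/- Morphisms of codes are monotone: if f : C → D is a morphism and c1, c2 ∈ C satisfy c1 ⊆ c2, then f(c1) ⊆ f(c2). -/
theorem morphism_monotone {n m : ℕ} (C : Set (Finset (Fin n)))
    (D : Set (Finset (Fin m))) (f : Finset (Fin n) → Finset (Fin m))
    (hf : IsMorphism C D f) (c₁ c₂ : Finset (Fin n))
    (hc₁ : c₁ ∈ C) (hc₂ : c₂ ∈ C) (h : c₁ ⊆ c₂) : f c₁ ⊆ f c₂ := by
  obtain ⟨hmap, htr⟩ := hf
  have hT : IsTrunk D (trunk D (f c₁)) := Or.inr ⟨f c₁, rfl⟩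
  have hP := htr _ hT
  have hc₁P : c₁ ∈ {c | c ∈ C ∧ f c ∈ trunk D (f c₁)} :=
    ⟨hc₁, hmap c₁ hc₁, subset_rfl⟩
  rcases hP with hP | ⟨σ, hP⟩
  · rw [hP] at hc₁P; exact absurd hc₁P (Set.notMem_empty _)
  · rw [hP] at hc₁P
    have hc₂P : c₂ ∈ trunk C σ := ⟨hc₂, hc₁P.2.trans h⟩
    rw [← hP] at hc₂P
    exact hc₂P.2.2
end

section
/- Given a code C ⊆ 2^[n] and a finite collection S = {T_1, ..., T_m} of trunks in C, the function f_S : C → 2^[m] defined by f_S(c) = {j ∈ [m] : c ∈ T_j} is a morphism of codes. -/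
theorem morphism_from_trunks {n m : ℕ} (C : Set (Finset (Fin n)))
    (T : Fin m → Set (Finset (Fin n))) (hT : ∀ j, IsTrunk C (T j))
    (f : Finset (Fin n) → Finset (Fin m))
    (hf : ∀ c ∈ C, ∀ j : Fin m, j ∈ f c ↔ c ∈ T j) :
    IsMorphism C (Set.univ : Set (Finset (Fin m))) f := by
  classical
  constructor
  · intro c _; trivial
  · intro T' hT'
    rcases hT' with h | ⟨τ, rfl⟩
    · left
      ext c
      simp [h]
    · by_cases hemp : ∃ j ∈ τ, T j = ∅
      · left
        obtain ⟨j, hjτ, hj⟩ := hemp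
        ext c
        simp only [Set.mem_setOf_eq, trunk, Set.mem_univ, true_and, Set.mem_empty_iff_false,
          iff_false, not_and]
        intro hc hsub
        have := (hf c hc j).mp (hsub hjτ)
        rw [hj] at this
        exact this
      · push_neg at hemp
        have hσ : ∀ j ∈ τ, ∃ σ, T j = trunk C σ := by
          intro j hj
          rcases hT j with h | h
          · exact absurd h ((hemp j hj).ne_empty)
          · exact h
        choose g hg using hσ
        right
        refine ⟨τ.attach.biUnion (fun j => g j.1 j.2), ?_⟩
        ext c
        simp only [Set.mem_setOf_eq, trunk, Set.mem_univ, true_and]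
        constructor
        · rintro ⟨hc, hsub⟩
          refine ⟨hc, Finset.biUnion_subset.mpr fun j _ => ?_⟩
          have hcj : c ∈ T j.1 := (hf c hc j.1).mp (hsub j.2)
          rw [hg j.1 j.2] at hcj
          exact hcj.2
        · rintro ⟨hc, hsub⟩
          refine ⟨hc, fun j hj => ?_⟩
          rw [hf c hc j, hg j hj]
          exact ⟨hc, fun x hx => hsub (Finset.mem_biUnion.mpr ⟨⟨j, hj⟩, Finset.mem_attach _ _, hx⟩)⟩
end

section
/- Every irreducible trunk in a code is simple: if C ⊆ 2^[n] and T ⊆ C is an irreducible trunk, then T = Tk_C({i}) for some i ∈ [n]. -/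
def IsIrreducibleTrunk {n : ℕ} (C T : Set (Finset (Fin n))) : Prop :=
  IsTrunk C T ∧ T ≠ ∅ ∧ T ≠ C ∧
  ¬ ∃ T₁ T₂ : Set (Finset (Fin n)),
      IsTrunk C T₁ ∧ IsTrunk C T₂ ∧ T ⊂ T₁ ∧ T ⊂ T₂ ∧ T = T₁ ∩ T₂

lemma trunk_split {n : ℕ} (C : Set (Finset (Fin n))) (σ : Finset (Fin n)) (i : Fin n)
    (hi : i ∈ σ) : trunk C σ = trunk C {i} ∩ trunk C (σ.erase i) := by
  ext c
  simp only [trunk, Set.mem_setOf_eq, Set.mem_inter_iff, Finset.singleton_subset_iff]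
  constructor
  · rintro ⟨hc, hs⟩
    exact ⟨⟨hc, hs hi⟩, hc, (Finset.erase_subset i σ).trans hs⟩
  · rintro ⟨⟨hc, hic⟩, -, hs⟩
    refine ⟨hc, fun j hj => ?_⟩
    rcases eq_or_ne j i with rfl | hne
    · exact hic
    · exact hs (Finset.mem_erase.mpr ⟨hne, hj⟩)

lemma trunk_subset_singleton {n : ℕ} (C : Set (Finset (Fin n))) (σ : Finset (Fin n)) (i : Fin n)
    (hi : i ∈ σ) : trunk C σ ⊆ trunk C {i} := by
  rintro c ⟨hc, hs⟩
  exact ⟨hc, Finset.singleton_subset_iff.mpr (hs hi)⟩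

lemma aux_irred {n : ℕ} (C : Set (Finset (Fin n))) (σ : Finset (Fin n)) :
    ∀ T : Set (Finset (Fin n)), IsIrreducibleTrunk C T → T = trunk C σ →
      ∃ i : Fin n, T = trunk C {i} := by
  induction σ using Finset.strongInduction with
  | _ σ IH =>
    intro T hT hTσ
    obtain ⟨-, hne, hneC, hirr⟩ := hT
    rcases σ.eq_empty_or_nonempty with rfl | ⟨i, hi⟩
    · exfalso; apply hneC
      rw [hTσ]; ext c; simp [trunk]
    · rcases eq_or_ne T (trunk C {i}) with h | h
      · exact ⟨i, h⟩
      · have hsub : T ⊂ trunk C {i} := by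
          rw [hTσ]
          exact lt_of_le_of_ne (trunk_subset_singleton C σ i hi) (hTσ ▸ h)
        rcases eq_or_ne T (trunk C (σ.erase i)) with h2 | h2
        · exact IH (σ.erase i) (Finset.erase_ssubset hi) T ⟨Or.inr ⟨σ, hTσ⟩, hne, hneC, hirr⟩ h2
        · exfalso
          apply hirr
          refine ⟨trunk C {i}, trunk C (σ.erase i), Or.inr ⟨_, rfl⟩, Or.inr ⟨_, rfl⟩,
            hsub, ?_, by rw [hTσ, trunk_split C σ i hi]⟩
          refine lt_of_le_of_ne ?_ h2
          rw [hTσ]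
          rintro c ⟨hc, hs⟩
          exact ⟨hc, (Finset.erase_subset i σ).trans hs⟩

theorem irreducible_trunk_is_simple {n : ℕ} (C T : Set (Finset (Fin n)))
    (hT : IsIrreducibleTrunk C T) : ∃ i : Fin n, T = trunk C {i} := by
  rcases hT.1 with h | ⟨σ, hσ⟩
  · exact absurd h hT.2.1
  · exact aux_irred C σ T hT hσ
end

section
/- A code C ⊆ 2^[n] is reduced if and only if the map i ↦ Tk_C({i}) is a bijection between [n] and the set of irreducible trunks in C. -/
def TrivialNeuron {n : ℕ} (C : Set (Finset (Fin n))) (i : Fin n) : Prop :=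
  trunk C {i} = ∅

def RedundantNeuron {n : ℕ} (C : Set (Finset (Fin n))) (i : Fin n) : Prop :=
  ¬ TrivialNeuron C i ∧ ∃ σ : Finset (Fin n), i ∉ σ ∧ trunk C {i} = trunk C σ

def Reduced {n : ℕ} (C : Set (Finset (Fin n))) : Prop :=
  ∀ i : Fin n, ¬ TrivialNeuron C i ∧ ¬ RedundantNeuron C i

lemma trunk_empty {n : ℕ} (C : Set (Finset (Fin n))) : trunk C ∅ = C := by
  ext c; simp [trunk]

lemma trunk_mono {n : ℕ} (C : Set (Finset (Fin n))) {σ τ : Finset (Fin n)} (h : σ ⊆ τ) :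
    trunk C τ ⊆ trunk C σ := fun c hc => ⟨hc.1, h.trans hc.2⟩

lemma trunk_inter {n : ℕ} (C : Set (Finset (Fin n))) (σ τ : Finset (Fin n)) :
    trunk C σ ∩ trunk C τ = trunk C (σ ∪ τ) := by
  ext c; simp only [trunk, Set.mem_inter_iff, Set.mem_setOf_eq, Finset.union_subset_iff]
  tauto

lemma irr_eq_singleton {n : ℕ} (C : Set (Finset (Fin n))) {T : Set (Finset (Fin n))}
    (hT : IsIrreducibleTrunk C T) :
    ∀ σ : Finset (Fin n), T = trunk C σ → ∃ j ∈ σ, T = trunk C {j} := by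
  intro σ
  induction σ using Finset.strongInduction with
  | _ σ ih =>
    intro hσ
    rcases Finset.eq_empty_or_nonempty σ with rfl | ⟨j, hj⟩
    · exact absurd (by rw [hσ, trunk_empty]) hT.2.2.1
    by_cases h1 : T = trunk C {j}
    · exact ⟨j, hj, h1⟩
    have hsub1 : T ⊆ trunk C {j} := hσ ▸ trunk_mono C (Finset.singleton_subset_iff.mpr hj)
    have hsub2 : T ⊆ trunk C (σ.erase j) := hσ ▸ trunk_mono C (Finset.erase_subset j σ)
    by_cases h2 : T = trunk C (σ.erase j)
    · obtain ⟨k, hk, hk'⟩ := ih (σ.erase j) (Finset.erase_ssubset hj) h2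
      exact ⟨k, Finset.mem_of_mem_erase hk, hk'⟩
    exfalso
    apply hT.2.2.2
    refine ⟨trunk C {j}, trunk C (σ.erase j), Or.inr ⟨_, rfl⟩, Or.inr ⟨_, rfl⟩,
      ⟨hsub1, fun h => h1 (le_antisymm hsub1 h)⟩,
      ⟨hsub2, fun h => h2 (le_antisymm hsub2 h)⟩, ?_⟩
    rw [hσ, trunk_inter]
    have hu : ({j} ∪ σ.erase j : Finset (Fin n)) = σ := by
      ext x
      by_cases hx : x = j <;> simp [hx, hj, Finset.mem_erase]
    rw [hu]

theorem reduced_iff_bijection {n : ℕ} (C : Set (Finset (Fin n))) :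
    Reduced C ↔
      Set.BijOn (fun i : Fin n => trunk C {i}) Set.univ
        {T : Set (Finset (Fin n)) | IsIrreducibleTrunk C T} := by
  constructor
  · intro hR
    have hmaps : ∀ i : Fin n, IsIrreducibleTrunk C (trunk C {i}) := by
      intro i
      obtain ⟨htriv, hred⟩ := hR i
      refine ⟨Or.inr ⟨_, rfl⟩, htriv, ?_, ?_⟩
      · intro hC
        exact hred ⟨htriv, ∅, by simp, by rw [trunk_empty, hC]⟩
      · rintro ⟨T₁, T₂, hT₁, hT₂, hs₁, hs₂, heq⟩
        have hne₁ : T₁ ≠ ∅ := fun h => htriv (Set.eq_empty_of_subset_empty (h ▸ hs₁.1))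
        have hne₂ : T₂ ≠ ∅ := fun h => htriv (Set.eq_empty_of_subset_empty (h ▸ hs₂.1))
        obtain ⟨σ₁, rfl⟩ := hT₁.resolve_left hne₁
        obtain ⟨σ₂, rfl⟩ := hT₂.resolve_left hne₂
        have hi₁ : i ∉ σ₁ := fun h =>
          hs₁.2 (trunk_mono C (Finset.singleton_subset_iff.mpr h))
        have hi₂ : i ∉ σ₂ := fun h =>
          hs₂.2 (trunk_mono C (Finset.singleton_subset_iff.mpr h))
        refine hred ⟨htriv, σ₁ ∪ σ₂, ?_, by rw [heq, trunk_inter]⟩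
        simp [hi₁, hi₂]
    refine ⟨fun i _ => hmaps i, ?_, ?_⟩
    · intro i _ j _ hij
      by_contra hne
      have : i ∉ ({j} : Finset (Fin n)) := by simp [hne]
      exact (hR i).2 ⟨(hR i).1, {j}, this, hij⟩
    · intro T hT
      obtain ⟨σ, hσ⟩ := hT.1.resolve_left hT.2.1
      obtain ⟨j, _, hj⟩ := irr_eq_singleton C hT σ hσ
      exact ⟨j, Set.mem_univ j, hj.symm⟩
  · intro hB i
    have hirr : IsIrreducibleTrunk C (trunk C {i}) := hB.1 (Set.mem_univ i)
    refine ⟨hirr.2.1, ?_⟩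
    rintro ⟨-, σ, hiσ, heq⟩
    have hirr' : IsIrreducibleTrunk C (trunk C {i}) := hirr
    obtain ⟨j, hjσ, hj⟩ := irr_eq_singleton C hirr' σ heq
    have : i = j := hB.2.1 (Set.mem_univ i) (Set.mem_univ j) hj
    exact hiσ (this ▸ hjσ)
end

section
/- Every isomorphism between reduced codes is a permutation isomorphism: if C ⊆ 2^[n] and D ⊆ 2^[m] are reduced codes and f : C → D is an isomorphism, then n = m and there is a bijection w : [n] → [m] such that f(c) = w(c) for all c ∈ C. -/
lemma trunk_singleton_eq_of_reduced {n : ℕ} {C : Set (Finset (Fin n))} (hC : Reduced C)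
    {i i' : Fin n} (h : trunk C {i} = trunk C {i'}) : i = i' := by
  by_contra hne
  exact (hC i).2 ⟨(hC i).1, {i'}, by simpa using hne, h⟩

lemma key_trunk {n m : ℕ} (C : Set (Finset (Fin n))) (D : Set (Finset (Fin m)))
    (f : Finset (Fin n) → Finset (Fin m)) (g : Finset (Fin m) → Finset (Fin n))
    (hf : IsMorphism C D f) (hg : IsMorphism D C g)
    (hgf : ∀ c ∈ C, g (f c) = c)
    (hC : Reduced C) :
    ∀ i : Fin n, ∃ j : Fin m, trunk C {i} = {c | c ∈ C ∧ f c ∈ trunk D {j}} := by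
  intro i
  classical
  have hSi : IsTrunk D {d | d ∈ D ∧ g d ∈ trunk C {i}} := hg.2 _ (Or.inr ⟨{i}, rfl⟩)
  have hnt : ¬ TrivialNeuron C i := (hC i).1
  have hex : ∃ c, c ∈ trunk C {i} := by
    by_contra h
    push_neg at h
    exact hnt (Set.eq_empty_iff_forall_notMem.mpr h)
  obtain ⟨c0, hc0⟩ := hex
  have hc0C : c0 ∈ C := hc0.1
  have hfc0 : f c0 ∈ {d | d ∈ D ∧ g d ∈ trunk C {i}} := ⟨hf.1 _ hc0C, by rwa [hgf _ hc0C]⟩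
  obtain ⟨τ, hτ⟩ : ∃ τ, {d | d ∈ D ∧ g d ∈ trunk C {i}} = trunk D τ := by
    rcases hSi with h | h
    · exact absurd (h ▸ hfc0) (Set.notMem_empty _)
    · exact h
  have hmem : ∀ c ∈ C, (c ∈ trunk C {i} ↔ f c ∈ trunk D τ) := by
    intro c hcC
    constructor
    · intro hc
      have h1 : f c ∈ {d | d ∈ D ∧ g d ∈ trunk C {i}} := ⟨hf.1 _ hcC, by rwa [hgf _ hcC]⟩
      rwa [hτ] at h1
    · intro hfc
      have h1 : f c ∈ {d | d ∈ D ∧ g d ∈ trunk C {i}} := hτ ▸ hfc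
      have h2 := h1.2
      rwa [hgf _ hcC] at h2
  have hTj : ∀ j ∈ τ, ∃ σ : Finset (Fin n),
      {c | c ∈ C ∧ f c ∈ trunk D {j}} = trunk C σ := by
    intro j hj
    rcases hf.2 (trunk D {j}) (Or.inr ⟨{j}, rfl⟩) with h | h
    · exfalso
      have hc0' : c0 ∈ {c | c ∈ C ∧ f c ∈ trunk D {j}} := by
        refine ⟨hc0C, ?_⟩
        have hfc0' := (hmem c0 hc0C).1 hc0
        exact ⟨hfc0'.1, Finset.singleton_subset_iff.mpr (hfc0'.2 hj)⟩
      exact (h ▸ hc0' : c0 ∈ (∅ : Set (Finset (Fin n))))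
    · exact h
  choose! σ hσ using hTj
  have hbig : trunk C {i} = trunk C (τ.biUnion σ) := by
    ext c
    constructor
    · intro hc
      refine ⟨hc.1, ?_⟩
      intro x hx
      obtain ⟨j, hj, hx⟩ := Finset.mem_biUnion.mp hx
      have hfc := (hmem c hc.1).1 hc
      have hcσ : c ∈ trunk C (σ j) := by
        rw [← hσ j hj]
        exact ⟨hc.1, hfc.1, Finset.singleton_subset_iff.mpr (hfc.2 hj)⟩
      exact hcσ.2 hx
    · intro hc
      refine (hmem c hc.1).2 ⟨hf.1 _ hc.1, ?_⟩
      intro j hj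
      have hsub : σ j ⊆ c := fun x hx => hc.2 (Finset.mem_biUnion.mpr ⟨j, hj, hx⟩)
      have hcT : c ∈ {c | c ∈ C ∧ f c ∈ trunk D {j}} :=
        (hσ j hj) ▸ (⟨hc.1, hsub⟩ : c ∈ trunk C (σ j))
      exact Finset.singleton_subset_iff.mp hcT.2.2
  have hiU : i ∈ τ.biUnion σ := by
    by_contra hiU
    exact (hC i).2 ⟨hnt, τ.biUnion σ, hiU, hbig⟩
  obtain ⟨j, hjτ, hiσ⟩ := Finset.mem_biUnion.mp hiU
  refine ⟨j, Set.Subset.antisymm ?_ ?_⟩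
  · intro c hc
    have hfc := (hmem c hc.1).1 hc
    exact ⟨hc.1, hfc.1, Finset.singleton_subset_iff.mpr (hfc.2 hjτ)⟩
  · rw [hσ j hjτ]
    intro c hc
    exact ⟨hc.1, Finset.singleton_subset_iff.mpr (hc.2 hiσ)⟩

theorem iso_of_reduced_is_permutation {n m : ℕ} (C : Set (Finset (Fin n)))
    (D : Set (Finset (Fin m))) (f : Finset (Fin n) → Finset (Fin m))
    (g : Finset (Fin m) → Finset (Fin n))
    (hf : IsMorphism C D f) (hg : IsMorphism D C g)
    (hgf : ∀ c ∈ C, g (f c) = c) (hfg : ∀ d ∈ D, f (g d) = d)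
    (hC : Reduced C) (hD : Reduced D) :
    n = m ∧ ∃ w : Fin n ≃ Fin m, ∀ c ∈ C, f c = c.image w := by
  classical
  choose w0 hw0 using key_trunk C D f g hf hg hgf hC
  choose v0 hv0 using key_trunk D C g f hg hf hfg hD
  have hvw : ∀ i, v0 (w0 i) = i := by
    intro i
    refine (trunk_singleton_eq_of_reduced hC ?_).symm
    rw [hw0 i]
    ext c
    constructor
    · rintro ⟨hcC, hfc⟩
      rw [hv0 (w0 i)] at hfc
      have h2 := hfc.2
      rwa [hgf _ hcC] at h2
    · intro hc
      refine ⟨hc.1, ?_⟩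
      rw [hv0 (w0 i)]
      exact ⟨hf.1 _ hc.1, by rwa [hgf _ hc.1]⟩
  have hwv : ∀ j, w0 (v0 j) = j := by
    intro j
    refine (trunk_singleton_eq_of_reduced hD ?_).symm
    rw [hv0 j]
    ext d
    constructor
    · rintro ⟨hdD, hgd⟩
      rw [hw0 (v0 j)] at hgd
      have h2 := hgd.2
      rwa [hfg _ hdD] at h2
    · intro hd
      refine ⟨hd.1, ?_⟩
      rw [hw0 (v0 j)]
      exact ⟨hg.1 _ hd.1, by rwa [hfg _ hd.1]⟩
  let w : Fin n ≃ Fin m := ⟨w0, v0, hvw, hwv⟩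
  refine ⟨Fin.equiv_iff_eq.mp ⟨w⟩, w, ?_⟩
  intro c hcC
  ext j
  simp only [Finset.mem_image, Equiv.coe_fn_mk, w]
  constructor
  · intro hj
    refine ⟨v0 j, ?_, hwv j⟩
    have h1 : f c ∈ trunk D {j} := ⟨hf.1 _ hcC, Finset.singleton_subset_iff.mpr hj⟩
    rw [hv0 j] at h1
    have h2 := h1.2
    rw [hgf _ hcC] at h2
    exact Finset.singleton_subset_iff.mp h2.2
  · rintro ⟨i, hi, rfl⟩
    have h1 : c ∈ trunk C {i} := ⟨hcC, Finset.singleton_subset_iff.mpr hi⟩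
    rw [hw0 i] at h1
    exact Finset.singleton_subset_iff.mp h1.2.2
end

section
/- A code C ⊆ 2^[n] is intersection complete if and only if every nonempty trunk in C contains a unique minimal codeword (with respect to inclusion). -/
def IntersectionComplete {n : ℕ} (C : Set (Finset (Fin n))) : Prop :=
  ∀ c₁ ∈ C, ∀ c₂ ∈ C, c₁ ∩ c₂ ∈ C

theorem intersectionComplete_iff_unique_min {n : ℕ} (C : Set (Finset (Fin n))) :
    IntersectionComplete C ↔
      ∀ T : Set (Finset (Fin n)), IsTrunk C T → T.Nonempty →
        ∃ c ∈ T, ∀ c' ∈ T, c ⊆ c' := by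
  constructor
  · intro hIC T hT hne
    rcases hT with h0 | ⟨σ, rfl⟩
    · exact absurd h0 (Set.nonempty_iff_ne_empty.mp hne)
    obtain ⟨c, hcT, hmin⟩ := Set.exists_min_image _ (fun c => c.card) (Set.toFinite _) hne
    refine ⟨c, hcT, fun c' hc'T => ?_⟩
    have hmem : c ∩ c' ∈ trunk C σ :=
      ⟨hIC c hcT.1 c' hc'T.1, Finset.subset_inter hcT.2 hc'T.2⟩
    have hcard := hmin _ hmem
    have hle : c ∩ c' ⊆ c := Finset.inter_subset_left
    have : c ∩ c' = c := Finset.eq_of_subset_of_card_le hle hcard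
    calc c = c ∩ c' := this.symm
      _ ⊆ c' := Finset.inter_subset_right
  · intro h c₁ hc₁ c₂ hc₂
    obtain ⟨c, hcT, hmin⟩ := h (trunk C (c₁ ∩ c₂))
      (Or.inr ⟨c₁ ∩ c₂, rfl⟩) ⟨c₁, hc₁, Finset.inter_subset_left⟩
    have h1 : c ⊆ c₁ := hmin c₁ ⟨hc₁, Finset.inter_subset_left⟩
    have h2 : c ⊆ c₂ := hmin c₂ ⟨hc₂, Finset.inter_subset_right⟩
    have : c = c₁ ∩ c₂ :=
      Finset.Subset.antisymm (Finset.subset_inter h1 h2) hcT.2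
    rw [← this]; exact hcT.1
end

section
/- The image of an intersection complete code under a morphism of codes is intersection complete. -/
theorem image_intersectionComplete {n m : ℕ} (C : Set (Finset (Fin n)))
    (D : Set (Finset (Fin m))) (f : Finset (Fin n) → Finset (Fin m))
    (hf : IsMorphism C D f) (hsurj : ∀ d ∈ D, ∃ c ∈ C, f c = d)
    (hC : IntersectionComplete C) : IntersectionComplete D := by
  obtain ⟨hmap, htrunk⟩ := hf
  -- f is monotone on C
  have hmono : ∀ c ∈ C, ∀ c' ∈ C, c ⊆ c' → f c ⊆ f c' := by
    intro c hc c' hc' hsub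
    have hT : IsTrunk D (trunk D (f c)) := Or.inr ⟨f c, rfl⟩
    rcases htrunk _ hT with hE | ⟨σ, hσ⟩
    · exfalso
      have : c ∈ {x | x ∈ C ∧ f x ∈ trunk D (f c)} := ⟨hc, hmap c hc, subset_rfl⟩
      rw [hE] at this; exact this
    · have hcP : c ∈ {x | x ∈ C ∧ f x ∈ trunk D (f c)} := ⟨hc, hmap c hc, subset_rfl⟩
      rw [hσ] at hcP
      have hc'P : c' ∈ trunk C σ := ⟨hc', hcP.2.trans hsub⟩
      have : c' ∈ {x | x ∈ C ∧ f x ∈ trunk D (f c)} := by rw [hσ]; exact hc'P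
      exact this.2.2
  intro d₁ hd₁ d₂ hd₂
  obtain ⟨c₁, hc₁, rfl⟩ := hsurj d₁ hd₁
  obtain ⟨c₂, hc₂, rfl⟩ := hsurj d₂ hd₂
  have hT : IsTrunk D (trunk D (f c₁ ∩ f c₂)) := Or.inr ⟨_, rfl⟩
  rcases htrunk _ hT with hE | ⟨σ, hσ⟩
  · exfalso
    have : c₁ ∈ {x | x ∈ C ∧ f x ∈ trunk D (f c₁ ∩ f c₂)} :=
      ⟨hc₁, hmap c₁ hc₁, Finset.inter_subset_left⟩
    rw [hE] at this; exact this
  · have h1 : c₁ ∈ trunk C σ := by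
      have : c₁ ∈ {x | x ∈ C ∧ f x ∈ trunk D (f c₁ ∩ f c₂)} :=
        ⟨hc₁, hmap c₁ hc₁, Finset.inter_subset_left⟩
      rw [hσ] at this; exact this
    have h2 : c₂ ∈ trunk C σ := by
      have : c₂ ∈ {x | x ∈ C ∧ f x ∈ trunk D (f c₁ ∩ f c₂)} :=
        ⟨hc₂, hmap c₂ hc₂, Finset.inter_subset_right⟩
      rw [hσ] at this; exact this
    have hcC : c₁ ∩ c₂ ∈ C := hC c₁ hc₁ c₂ hc₂
    have hcP : c₁ ∩ c₂ ∈ trunk C σ :=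
      ⟨hcC, Finset.subset_inter h1.2 h2.2⟩
    have hmem : c₁ ∩ c₂ ∈ {x | x ∈ C ∧ f x ∈ trunk D (f c₁ ∩ f c₂)} := by
      rw [hσ]; exact hcP
    have hge : f c₁ ∩ f c₂ ⊆ f (c₁ ∩ c₂) := hmem.2.2
    have hle : f (c₁ ∩ c₂) ⊆ f c₁ ∩ f c₂ :=
      Finset.subset_inter (hmono _ hcC _ hc₁ Finset.inter_subset_left)
        (hmono _ hcC _ hc₂ Finset.inter_subset_right)
    have : f (c₁ ∩ c₂) = f c₁ ∩ f c₂ := subset_antisymm hle hge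
    rw [← this]; exact hmap _ hcC
end

section
/- The image of a max-intersection complete code under a surjective morphism of codes is max-intersection complete. -/
def MaximalCodeword {n : ℕ} (C : Set (Finset (Fin n))) (c : Finset (Fin n)) : Prop :=
  c ∈ C ∧ ∀ c' ∈ C, c ⊆ c' → c = c'

def MaxIntersectionComplete {n : ℕ} (C : Set (Finset (Fin n))) : Prop :=
  ∀ M : Finset (Finset (Fin n)), M.Nonempty →
    (∀ c ∈ M, MaximalCodeword C c) → M.inf id ∈ C

section Trunk

variable {n : ℕ} {C T : Set (Finset (Fin n))}

lemma IsTrunk.mem_of_subset (hT : IsTrunk C T) {c c' : Finset (Fin n)} (hc : c ∈ T)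
    (hc' : c' ∈ C) (hcc' : c ⊆ c') : c' ∈ T := by
  obtain rfl | ⟨σ, rfl⟩ := hT
  · exact hc.elim
  · exact ⟨hc', hc.2.trans hcc'⟩

lemma IsTrunk.inf_mem (hT : IsTrunk C T) {M : Finset (Finset (Fin n))} (hM : M.Nonempty)
    (hMT : ∀ c ∈ M, c ∈ T) (hinf : M.inf id ∈ C) : M.inf id ∈ T := by
  obtain rfl | ⟨σ, rfl⟩ := hT
  · obtain ⟨c, hc⟩ := hM
    exact (hMT c hc).elim
  · exact ⟨hinf, Finset.le_inf fun c hc => (hMT c hc).2⟩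

end Trunk

lemma exists_maximalCodeword_superset {n : ℕ} {C : Set (Finset (Fin n))} {c : Finset (Fin n)}
    (hc : c ∈ C) : ∃ c', MaximalCodeword C c' ∧ c ⊆ c' := by
  obtain ⟨c', hcc', hmax⟩ := Finite.exists_le_maximal (p := (· ∈ C)) hc
  exact ⟨c', ⟨hmax.1, fun c'' hc'' h => h.antisymm (hmax.2 hc'' h)⟩, hcc'⟩

namespace IsMorphism

variable {n m : ℕ} {C : Set (Finset (Fin n))} {D : Set (Finset (Fin m))}
  {f : Finset (Fin n) → Finset (Fin m)}

lemma isTrunk_preimage_trunk (hf : IsMorphism C D f) (σ : Finset (Fin m)) :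
    IsTrunk C {c | c ∈ C ∧ f c ∈ trunk D σ} :=
  hf.2 _ (Or.inr ⟨σ, rfl⟩)

lemma map_subset_map (hf : IsMorphism C D f) {c c' : Finset (Fin n)} (hc : c ∈ C) (hc' : c' ∈ C)
    (hcc' : c ⊆ c') : f c ⊆ f c' :=
  ((hf.isTrunk_preimage_trunk (f c)).mem_of_subset ⟨hc, hf.1 c hc, subset_rfl⟩ hc' hcc').2.2

lemma map_inf (hf : IsMorphism C D f) {M : Finset (Finset (Fin n))} (hM : M.Nonempty)
    (hMC : ∀ c ∈ M, c ∈ C) (hinf : M.inf id ∈ C) : f (M.inf id) = M.inf f := by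
  refine subset_antisymm (Finset.le_inf fun c hc => ?_) ?_
  · exact hf.map_subset_map hinf (hMC c hc) (Finset.inf_le (f := id) hc)
  · have hMT : ∀ c ∈ M, c ∈ {c | c ∈ C ∧ f c ∈ trunk D (M.inf f)} := fun c hc =>
      ⟨hMC c hc, hf.1 c (hMC c hc), Finset.inf_le hc⟩
    exact ((hf.isTrunk_preimage_trunk _).inf_mem hM hMT hinf).2.2

lemma exists_maximalCodeword_map_eq (hf : IsMorphism C D f) (hsurj : ∀ d ∈ D, ∃ c ∈ C, f c = d)
    {d : Finset (Fin m)} (hd : MaximalCodeword D d) : ∃ c, MaximalCodeword C c ∧ f c = d := by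
  obtain ⟨c, hc, rfl⟩ := hsurj d hd.1
  obtain ⟨c', hc', hcc'⟩ := exists_maximalCodeword_superset hc
  exact ⟨c', hc', (hd.2 _ (hf.1 c' hc'.1) (hf.map_subset_map hc hc'.1 hcc')).symm⟩

end IsMorphism

theorem image_maxIntersectionComplete {n m : ℕ} (C : Set (Finset (Fin n)))
    (D : Set (Finset (Fin m))) (f : Finset (Fin n) → Finset (Fin m))
    (hf : IsMorphism C D f) (hsurj : ∀ d ∈ D, ∃ c ∈ C, f c = d)
    (hC : MaxIntersectionComplete C) : MaxIntersectionComplete D := by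
  intro M hM hMmax
  obtain ⟨M', hM'max, rfl⟩ : ∃ M' : Finset (Finset (Fin n)),
      ↑M' ⊆ {c | MaximalCodeword C c} ∧ M'.image f = M :=
    Finset.subset_set_image_iff.1 fun d hd => hf.exists_maximalCodeword_map_eq hsurj (hMmax d hd)
  have hM' : M'.Nonempty := Finset.image_nonempty.1 hM
  have hinf : M'.inf id ∈ C := hC M' hM' fun c hc => hM'max hc
  rw [Finset.inf_image, Function.id_comp, ← hf.map_inf hM' (fun c hc => (hM'max hc).1) hinf]
  exact hf.1 _ hinf
end

section
/- Let f : C → 2^[m] be the morphism determined by trunks T_1, ..., T_m in C (so f(c) = {j : c ∈ T_j}), and assume all T_j are nonempty. Then a neuron j ∈ [m] is redundant in the image code f(C) if and only if T_j = ⋂_{i∈σ} T_i for some σ ⊆ [m] with j ∉ σ. -/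
theorem image_redundant_iff {n m : ℕ} (C : Set (Finset (Fin n)))
    (T : Fin m → Set (Finset (Fin n))) (hT : ∀ j, IsTrunk C (T j))
    (hTne : ∀ j, (T j).Nonempty)
    (f : Finset (Fin n) → Finset (Fin m))
    (hf : ∀ c ∈ C, ∀ j : Fin m, j ∈ f c ↔ c ∈ T j)
    (j : Fin m) :
    RedundantNeuron (f '' C) j ↔
      ∃ σ : Finset (Fin m), j ∉ σ ∧ T j = C ∩ ⋂ i ∈ σ, T i := by
  have hTC : ∀ j', T j' ⊆ C := by
    intro j'
    rcases hT j' with h | ⟨σ, h⟩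
    · rcases hTne j' with ⟨c, hc⟩
      rw [h] at hc
      exact absurd hc (Set.notMem_empty c)
    · rw [h]; exact fun c hc => hc.1
  have hTeq : ∀ j' : Fin m, T j' = {c | c ∈ C ∧ j' ∈ f c} := by
    intro j'; ext c
    constructor
    · intro hc; exact ⟨hTC j' hc, (hf c (hTC j' hc) j').2 hc⟩
    · rintro ⟨hcC, hj⟩; exact (hf c hcC j').1 hj
  have hBig : ∀ σ : Finset (Fin m), (C ∩ ⋂ i ∈ σ, T i) = {c | c ∈ C ∧ σ ⊆ f c} := by
    intro σ; ext c
    simp only [Set.mem_inter_iff, Set.mem_iInter, Set.mem_setOf_eq, Finset.subset_iff]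
    constructor
    · rintro ⟨hcC, h⟩; exact ⟨hcC, fun i hi => (hf c hcC i).2 (h i hi)⟩
    · rintro ⟨hcC, h⟩; exact ⟨hcC, fun i hi => (hf c hcC i).1 (h hi)⟩
  have htrunk : ∀ σ : Finset (Fin m), trunk (f '' C) σ = f '' {c | c ∈ C ∧ σ ⊆ f c} := by
    intro σ; ext d
    simp only [trunk, Set.mem_setOf_eq, Set.mem_image]
    constructor
    · rintro ⟨⟨c, hcC, rfl⟩, hs⟩; exact ⟨c, ⟨hcC, hs⟩, rfl⟩
    · rintro ⟨c, ⟨hcC, hs⟩, rfl⟩; exact ⟨⟨c, hcC, rfl⟩, hs⟩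
  have hnt : ¬ TrivialNeuron (f '' C) j := by
    rcases hTne j with ⟨c, hc⟩
    have hcC := hTC j hc
    intro h
    have hm : f c ∈ trunk (f '' C) {j} := by
      refine ⟨⟨c, hcC, rfl⟩, ?_⟩
      simpa [Finset.singleton_subset_iff] using (hf c hcC j).2 hc
    rw [h] at hm
    exact hm
  constructor
  · rintro ⟨_, σ, hjσ, heq⟩
    refine ⟨σ, hjσ, ?_⟩
    rw [hTeq j, hBig σ]
    rw [htrunk, htrunk] at heq
    ext c
    simp only [Set.mem_setOf_eq]
    constructor
    · rintro ⟨hcC, hj⟩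
      have : f c ∈ f '' {c | c ∈ C ∧ σ ⊆ f c} := by
        rw [← heq]; exact ⟨c, ⟨hcC, by simpa using hj⟩, rfl⟩
      rcases this with ⟨c', ⟨_, hs⟩, hfc⟩
      exact ⟨hcC, hfc ▸ hs⟩
    · rintro ⟨hcC, hs⟩
      have : f c ∈ f '' {c | c ∈ C ∧ ({j} : Finset (Fin m)) ⊆ f c} := by
        rw [heq]; exact ⟨c, ⟨hcC, hs⟩, rfl⟩
      rcases this with ⟨c', ⟨_, hjc⟩, hfc⟩
      exact ⟨hcC, hfc ▸ Finset.singleton_subset_iff.mp hjc⟩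
  · rintro ⟨σ, hjσ, heq⟩
    refine ⟨hnt, σ, hjσ, ?_⟩
    rw [htrunk, htrunk]
    have h1 : {c | c ∈ C ∧ ({j} : Finset (Fin m)) ⊆ f c} = T j := by
      rw [hTeq j]; ext c; simp [Finset.singleton_subset_iff]
    rw [h1, heq, hBig]
end

section
/- Let C ⊆ 2^[n] be a code, let T_1, ..., T_m be its irreducible trunks, and let f : C → 2^[m] be the morphism f(c) = {j : c ∈ T_j}. Then f is injective. -/
lemma subset_of_same_irred {n m : ℕ} (C : Set (Finset (Fin n)))
    (T : Fin m → Set (Finset (Fin n)))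
    (hall : ∀ T' : Set (Finset (Fin n)), IsIrreducibleTrunk C T' → ∃ j, T' = T j)
    (f : Finset (Fin n) → Finset (Fin m))
    (hf : ∀ c ∈ C, ∀ j : Fin m, j ∈ f c ↔ c ∈ T j)
    {c₁ c₂ : Finset (Fin n)} (hc₁ : c₁ ∈ C) (hc₂ : c₂ ∈ C)
    (hfe : f c₁ = f c₂) : c₁ ⊆ c₂ := by
  by_contra hsub
  classical
  -- collection of σ whose trunk contains c₁ but not c₂
  set A : Finset (Finset (Fin n)) :=
    Finset.univ.filter (fun σ => σ ⊆ c₁ ∧ ¬ σ ⊆ c₂) with hA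
  have hmemA : ∀ σ, σ ∈ A ↔ (σ ⊆ c₁ ∧ ¬ σ ⊆ c₂) := by
    intro σ; simp [hA]
  have hAne : A.Nonempty := ⟨c₁, (hmemA c₁).2 ⟨subset_rfl, hsub⟩⟩
  obtain ⟨σ₀, hσ₀A, hmax⟩ := A.exists_max_image (fun σ => (trunk C σ).ncard) hAne
  obtain ⟨hσ₀c₁, hσ₀c₂⟩ := (hmemA σ₀).1 hσ₀A
  have hc₁T : c₁ ∈ trunk C σ₀ := ⟨hc₁, hσ₀c₁⟩
  have hc₂T : c₂ ∉ trunk C σ₀ := fun h => hσ₀c₂ h.2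
  have hirr : IsIrreducibleTrunk C (trunk C σ₀) := by
    refine ⟨Or.inr ⟨σ₀, rfl⟩, ?_, ?_, ?_⟩
    · intro h; rw [h] at hc₁T; exact hc₁T
    · intro h; rw [h] at hc₂T; exact hc₂T hc₂
    · rintro ⟨T₁, T₂, h1, h2, hs1, hs2, heq⟩
      have hc₂12 : c₂ ∉ T₁ ∨ c₂ ∉ T₂ := by
        by_contra h; push_neg at h
        exact hc₂T (heq ▸ Set.mem_inter h.1 h.2)
      have key : ∀ T' : Set (Finset (Fin n)), IsTrunk C T' →
          trunk C σ₀ ⊂ T' → c₂ ∉ T' → False := by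
        intro T' hT' hss hc₂'
        have hne : T' ≠ ∅ := by
          intro h; rw [h] at hss
          exact hss.subset hc₁T
        obtain ⟨σ', hσ'⟩ := hT'.resolve_left hne
        have hc₁' : c₁ ∈ T' := hss.subset hc₁T
        rw [hσ'] at hc₁' hc₂' hss
        have hσ'A : σ' ∈ A := (hmemA σ').2 ⟨hc₁'.2, fun h => hc₂' ⟨hc₂, h⟩⟩
        have := hmax σ' hσ'A
        have hlt := Set.ncard_lt_ncard hss (Set.toFinite _)
        omega
      rcases hc₂12 with h | h
      · exact key T₁ h1 (heq ▸ hs1) h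
      · exact key T₂ h2 (heq ▸ hs2) h
  obtain ⟨j, hj⟩ := hall _ hirr
  have h1 : j ∈ f c₁ := (hf c₁ hc₁ j).2 (hj ▸ hc₁T)
  rw [hfe] at h1
  exact hc₂T (hj ▸ (hf c₂ hc₂ j).1 h1)

theorem morphism_of_irreducible_trunks_injective {n m : ℕ} (C : Set (Finset (Fin n)))
    (T : Fin m → Set (Finset (Fin n)))
    (hT : ∀ j, IsIrreducibleTrunk C (T j))
    (hall : ∀ T' : Set (Finset (Fin n)), IsIrreducibleTrunk C T' → ∃ j, T' = T j)
    (f : Finset (Fin n) → Finset (Fin m))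
    (hf : ∀ c ∈ C, ∀ j : Fin m, j ∈ f c ↔ c ∈ T j) :
    Set.InjOn f C := by
  intro c₁ hc₁ c₂ hc₂ hfe
  exact Finset.Subset.antisymm
    (subset_of_same_irred C T hall f hf hc₁ hc₂ hfe)
    (subset_of_same_irred C T hall f hf hc₂ hc₁ hfe.symm)
end

section
/- If there exist surjective morphisms f : C → D and g : D → C between codes C and D, then C and D are isomorphic as codes. Equivalently, the relation '[D] ≤ [C] iff D is the image of C under a series of image and trunk operations' is antisymmetric on isomorphism classes of codes. -/
lemma morphism_comp {n m p : ℕ} {C : Set (Finset (Fin n))} {D : Set (Finset (Fin m))}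
    {E : Set (Finset (Fin p))} {f : Finset (Fin n) → Finset (Fin m)}
    {g : Finset (Fin m) → Finset (Fin p)} (hf : IsMorphism C D f) (hg : IsMorphism D E g) :
    IsMorphism C E (g ∘ f) := by
  constructor
  · intro c hc; exact hg.1 _ (hf.1 c hc)
  · intro T hT
    have h1 := hg.2 T hT
    have h2 := hf.2 _ h1
    convert h2 using 1
    ext c
    simp only [Set.mem_setOf_eq, Function.comp]
    constructor
    · rintro ⟨hc, hT⟩; exact ⟨hc, hf.1 c hc, hT⟩
    · rintro ⟨hc, _, hT⟩; exact ⟨hc, hT⟩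

lemma morphism_id {n : ℕ} (C : Set (Finset (Fin n))) : IsMorphism C C id := by
  refine ⟨fun c hc => hc, fun T hT => ?_⟩
  rcases hT with rfl | ⟨σ, rfl⟩
  · left; ext c; simp
  · right
    exact ⟨σ, by ext c; simp [trunk]⟩

lemma morphism_iterate {n : ℕ} {C : Set (Finset (Fin n))} {h : Finset (Fin n) → Finset (Fin n)}
    (hh : IsMorphism C C h) : ∀ j : ℕ, IsMorphism C C h^[j] := by
  intro j
  induction j with
  | zero => simpa using morphism_id C
  | succ j ih =>
    rw [Function.iterate_succ]
    exact morphism_comp hh ih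

theorem iso_of_surjections {n m : ℕ} (C : Set (Finset (Fin n)))
    (D : Set (Finset (Fin m))) (f : Finset (Fin n) → Finset (Fin m))
    (g : Finset (Fin m) → Finset (Fin n))
    (hf : IsMorphism C D f) (hfsurj : ∀ d ∈ D, ∃ c ∈ C, f c = d)
    (hg : IsMorphism D C g) (hgsurj : ∀ c ∈ C, ∃ d ∈ D, g d = c) :
    ∃ (F : Finset (Fin n) → Finset (Fin m)) (G : Finset (Fin m) → Finset (Fin n)),
      IsMorphism C D F ∧ IsMorphism D C G ∧
      (∀ c ∈ C, G (F c) = c) ∧ (∀ d ∈ D, F (G d) = d) := by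
  set h : Finset (Fin n) → Finset (Fin n) := g ∘ f with hh_def
  have hh : IsMorphism C C h := morphism_comp hf hg
  have hC : ∀ c ∈ C, h c ∈ C := hh.1
  have hsurj : ∀ c ∈ C, ∃ c' ∈ C, h c' = c := by
    intro c hc
    obtain ⟨d, hd, hgd⟩ := hgsurj c hc
    obtain ⟨c', hc', hfc'⟩ := hfsurj d hd
    exact ⟨c', hc', by simp [hh_def, Function.comp, hfc', hgd]⟩
  -- e : C → C induced by h
  let e : C → C := fun x => ⟨h x, hC x x.2⟩
  have hesurj : Function.Surjective e := by
    rintro ⟨c, hc⟩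
    obtain ⟨c', hc', hhc'⟩ := hsurj c hc
    exact ⟨⟨c', hc'⟩, Subtype.ext hhc'⟩
  have hebij : Function.Bijective e := Finite.surjective_iff_bijective.mp hesurj
  let perm : Equiv.Perm C := Equiv.ofBijective e hebij
  have key : ∀ (j : ℕ) (x : C), ((perm ^ j) x : Finset (Fin n)) = h^[j] (x : Finset (Fin n)) := by
    intro j
    induction j with
    | zero => intro x; simp
    | succ j ih =>
      intro x
      have h1 : (perm ^ (j + 1)) x = (perm ^ j) (perm x) := by
        rw [pow_succ]; rfl
      have h2 : (perm x : Finset (Fin n)) = h (x : Finset (Fin n)) := rfl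
      rw [h1, ih (perm x), h2, Function.iterate_succ_apply]
  set k := orderOf perm with hk_def
  have hkpos : 0 < k := orderOf_pos perm
  have hk1 : perm ^ k = 1 := pow_orderOf_eq_one perm
  have hfix : ∀ c ∈ C, h^[k] c = c := by
    intro c hc
    have := key k ⟨c, hc⟩
    rw [hk1] at this
    exact this.symm
  refine ⟨f, h^[k-1] ∘ g, hf, morphism_comp hg (morphism_iterate hh (k-1)), ?_, ?_⟩
  · intro c hc
    have : h^[k-1] (h c) = h^[k] c := by
      rw [← Function.iterate_succ_apply, Nat.succ_eq_add_one, Nat.sub_add_cancel hkpos]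
    calc (h^[k-1] ∘ g) (f c) = h^[k-1] (h c) := rfl
      _ = h^[k] c := this
      _ = c := hfix c hc
  · intro d hd
    obtain ⟨c, hc, hfc⟩ := hfsurj d hd
    have h1 : g d = h c := by rw [← hfc]; rfl
    have h2 : h^[k-1] (h c) = c := by
      rw [← Function.iterate_succ_apply, Nat.succ_eq_add_one, Nat.sub_add_cancel hkpos]
      exact hfix c hc
    calc f ((h^[k-1] ∘ g) d) = f (h^[k-1] (g d)) := rfl
      _ = f (h^[k-1] (h c)) := by rw [h1]
      _ = f c := by rw [h2]
      _ = d := hfc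
end

section
/- If C ⊆ 2^[n] and D ⊆ 2^[m] are codes with convex open realizations in Euclidean space, then the product code C × D = {c ∪ (d + n) : c ∈ C, d ∈ D} ⊆ 2^[n+m] (where d + n denotes shifting each element of d by n) has a convex open realization, with minimal embedding dimension at most mindim(C) + mindim(D). -/
def IsConvexRealization {n d : ℕ} (C : Set (Finset (Fin n)))
    (X : Set (EuclideanSpace ℝ (Fin d))) (U : Fin n → Set (EuclideanSpace ℝ (Fin d))) : Prop :=
  IsOpen X ∧ Convex ℝ X ∧
  (∀ i, IsOpen (U i) ∧ Convex ℝ (U i) ∧ U i ⊆ X) ∧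
  ∀ σ : Finset (Fin n), σ ∈ C ↔ ∃ x ∈ X, ∀ i : Fin n, x ∈ U i ↔ i ∈ σ

def IsConvexCodeIn (d : ℕ) {n : ℕ} (C : Set (Finset (Fin n))) : Prop :=
  ∃ (X : Set (EuclideanSpace ℝ (Fin d))) (U : Fin n → Set (EuclideanSpace ℝ (Fin d))),
    IsConvexRealization C X U

def prodCode {n m : ℕ} (C : Set (Finset (Fin n))) (D : Set (Finset (Fin m))) :
    Set (Finset (Fin (n + m))) :=
  {v | ∃ c ∈ C, ∃ d ∈ D, v = c.image (Fin.castAdd m) ∪ d.image (Fin.natAdd n)}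

open Set

section ProdCode

variable {n m : ℕ}

theorem Fin.castAdd_ne_natAdd (i : Fin n) (j : Fin m) : Fin.castAdd m i ≠ Fin.natAdd n j := by
  simp only [ne_eq, Fin.ext_iff, Fin.val_castAdd, Fin.val_natAdd]
  omega

theorem eq_image_castAdd_union_image_natAdd_iff (σ : Finset (Fin (n + m))) (c : Finset (Fin n))
    (d : Finset (Fin m)) :
    σ = c.image (Fin.castAdd m) ∪ d.image (Fin.natAdd n) ↔
      (∀ i, Fin.castAdd m i ∈ σ ↔ i ∈ c) ∧ ∀ j, Fin.natAdd n j ∈ σ ↔ j ∈ d := by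
  simp [Finset.ext_iff, Fin.forall_fin_add, Fin.castAdd_ne_natAdd,
    (Fin.castAdd_ne_natAdd _ _).symm]

theorem mem_prodCode_iff (C : Set (Finset (Fin n))) (D : Set (Finset (Fin m)))
    (σ : Finset (Fin (n + m))) :
    σ ∈ prodCode C D ↔
      ({i | Fin.castAdd m i ∈ σ} : Finset (Fin n)) ∈ C ∧
        ({j | Fin.natAdd n j ∈ σ} : Finset (Fin m)) ∈ D := by
  constructor
  · rintro ⟨c, hc, d, hd, hσ⟩
    obtain ⟨hcσ, hdσ⟩ := (eq_image_castAdd_union_image_natAdd_iff σ c d).1 hσ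
    have hc' : ({i | Fin.castAdd m i ∈ σ} : Finset (Fin n)) = c := by ext; simp [hcσ]
    have hd' : ({j | Fin.natAdd n j ∈ σ} : Finset (Fin m)) = d := by ext; simp [hdσ]
    exact ⟨hc' ▸ hc, hd' ▸ hd⟩
  · rintro ⟨hc, hd⟩
    exact ⟨_, hc, _, hd, (eq_image_castAdd_union_image_natAdd_iff σ {i | Fin.castAdd m i ∈ σ}
      {j | Fin.natAdd n j ∈ σ}).2 ⟨by simp, by simp⟩⟩

end ProdCode

section ProdCover

variable {α β : Type*} {n m : ℕ}

def prodCover (X₁ : Set α) (X₂ : Set β) (U₁ : Fin n → Set α) (U₂ : Fin m → Set β) :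
    Fin (n + m) → Set (α × β) :=
  Fin.addCases (fun i => U₁ i ×ˢ X₂) (fun j => X₁ ×ˢ U₂ j)

variable (X₁ : Set α) (X₂ : Set β) (U₁ : Fin n → Set α) (U₂ : Fin m → Set β)

@[simp]
theorem prodCover_castAdd (i : Fin n) :
    prodCover X₁ X₂ U₁ U₂ (Fin.castAdd m i) = U₁ i ×ˢ X₂ :=
  Fin.addCases_left i

@[simp]
theorem prodCover_natAdd (j : Fin m) :
    prodCover X₁ X₂ U₁ U₂ (Fin.natAdd n j) = X₁ ×ˢ U₂ j :=
  Fin.addCases_right j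

theorem forall_mem_prodCover_iff {x₁ : α} {x₂ : β} (h₁ : x₁ ∈ X₁) (h₂ : x₂ ∈ X₂)
    (σ : Finset (Fin (n + m))) :
    (∀ k, (x₁, x₂) ∈ prodCover X₁ X₂ U₁ U₂ k ↔ k ∈ σ) ↔
      (∀ i, x₁ ∈ U₁ i ↔ Fin.castAdd m i ∈ σ) ∧ ∀ j, x₂ ∈ U₂ j ↔ Fin.natAdd n j ∈ σ := by
  simp [Fin.forall_fin_add, h₁, h₂]

theorem exists_mem_prodCover_iff (σ : Finset (Fin (n + m))) :
    (∃ p ∈ X₁ ×ˢ X₂, ∀ k, p ∈ prodCover X₁ X₂ U₁ U₂ k ↔ k ∈ σ) ↔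
      (∃ x₁ ∈ X₁, ∀ i, x₁ ∈ U₁ i ↔ Fin.castAdd m i ∈ σ) ∧
        ∃ x₂ ∈ X₂, ∀ j, x₂ ∈ U₂ j ↔ Fin.natAdd n j ∈ σ := by
  constructor
  · rintro ⟨⟨x₁, x₂⟩, ⟨h₁, h₂⟩, h⟩
    obtain ⟨hx₁, hx₂⟩ := (forall_mem_prodCover_iff X₁ X₂ U₁ U₂ h₁ h₂ σ).1 h
    exact ⟨⟨x₁, h₁, hx₁⟩, ⟨x₂, h₂, hx₂⟩⟩
  · rintro ⟨⟨x₁, h₁, hx₁⟩, ⟨x₂, h₂, hx₂⟩⟩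
    exact ⟨(x₁, x₂), ⟨h₁, h₂⟩, (forall_mem_prodCover_iff X₁ X₂ U₁ U₂ h₁ h₂ σ).2 ⟨hx₁, hx₂⟩⟩

end ProdCover

section Realization

variable {E F : Type*} [TopologicalSpace E] [AddCommGroup E] [Module ℝ E]
  [TopologicalSpace F] [AddCommGroup F] [Module ℝ F]

/-- `IsConvexRealization` over any real topological vector space; on `EuclideanSpace ℝ (Fin d)`
the two agree definitionally. -/
def IsOpenConvexRealization {n : ℕ} (C : Set (Finset (Fin n))) (X : Set E) (U : Fin n → Set E) :
    Prop :=
  IsOpen X ∧ Convex ℝ X ∧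
  (∀ i, IsOpen (U i) ∧ Convex ℝ (U i) ∧ U i ⊆ X) ∧
  ∀ σ : Finset (Fin n), σ ∈ C ↔ ∃ x ∈ X, ∀ i : Fin n, x ∈ U i ↔ i ∈ σ

theorem IsOpenConvexRealization.preimage {n : ℕ} {C : Set (Finset (Fin n))} {X : Set F}
    {U : Fin n → Set F} (h : IsOpenConvexRealization C X U) (e : E ≃L[ℝ] F) :
    IsOpenConvexRealization C (e ⁻¹' X) (fun i => e ⁻¹' U i) := by
  obtain ⟨hXo, hXc, hU, hcode⟩ := h
  refine ⟨hXo.preimage e.continuous, hXc.linear_preimage e.toLinearMap, fun i => ?_, fun σ => ?_⟩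
  · obtain ⟨hUo, hUc, hUX⟩ := hU i
    exact ⟨hUo.preimage e.continuous, hUc.linear_preimage e.toLinearMap, preimage_mono hUX⟩
  · exact (hcode σ).trans e.surjective.exists

theorem IsOpenConvexRealization.prod {n m : ℕ} {C : Set (Finset (Fin n))}
    {D : Set (Finset (Fin m))} {X₁ : Set E} {X₂ : Set F} {U₁ : Fin n → Set E}
    {U₂ : Fin m → Set F} (h₁ : IsOpenConvexRealization C X₁ U₁)
    (h₂ : IsOpenConvexRealization D X₂ U₂) :
    IsOpenConvexRealization (prodCode C D) (X₁ ×ˢ X₂) (prodCover X₁ X₂ U₁ U₂) := by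
  obtain ⟨hX₁o, hX₁c, hU₁, hcode₁⟩ := h₁
  obtain ⟨hX₂o, hX₂c, hU₂, hcode₂⟩ := h₂
  refine ⟨hX₁o.prod hX₂o, hX₁c.prod hX₂c, fun k => ?_, fun σ => ?_⟩
  · induction k using Fin.addCases with
    | left i =>
      obtain ⟨hUo, hUc, hUX⟩ := hU₁ i
      rw [prodCover_castAdd]
      exact ⟨hUo.prod hX₂o, hUc.prod hX₂c, prod_mono hUX subset_rfl⟩
    | right j =>
      obtain ⟨hUo, hUc, hUX⟩ := hU₂ j
      rw [prodCover_natAdd]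
      exact ⟨hX₁o.prod hUo, hX₁c.prod hUc, prod_mono subset_rfl hUX⟩
  · rw [mem_prodCode_iff, hcode₁, hcode₂, exists_mem_prodCover_iff]
    simp only [Finset.mem_filter, Finset.mem_univ, true_and]

end Realization

theorem product_convex {n m d₁ d₂ : ℕ} (C : Set (Finset (Fin n))) (D : Set (Finset (Fin m)))
    (hC : IsConvexCodeIn d₁ C) (hD : IsConvexCodeIn d₂ D) :
    IsConvexCodeIn (d₁ + d₂) (prodCode C D) := by
  obtain ⟨X₁, U₁, h₁⟩ := hC
  obtain ⟨X₂, U₂, h₂⟩ := hD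
  exact ⟨_, _, (IsOpenConvexRealization.prod h₁ h₂).preimage EuclideanSpace.finAddEquivProd⟩
end

section
/- If a code C ⊆ 2^[n] has a convex open realization in an open convex subset X of ℝ^d and σ ⊆ [n], then the trunk Tk_C(σ) is also a convex code realizable in ℝ^d. -/
theorem trunk_convex {n d : ℕ} (C : Set (Finset (Fin n)))
    (X : Set (EuclideanSpace ℝ (Fin d))) (U : Fin n → Set (EuclideanSpace ℝ (Fin d)))
    (hC : IsConvexRealization C X U) (σ : Finset (Fin n)) :
    IsConvexCodeIn d (trunk C σ) := by
  obtain ⟨hXo, hXc, hU, hcode⟩ := hC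
  set X' : Set (EuclideanSpace ℝ (Fin d)) := X ∩ ⋂ i ∈ σ, U i with hX'
  refine ⟨X', fun j => U j ∩ X', ?_, ?_, ?_, ?_⟩
  · exact hXo.inter (isOpen_biInter_finset fun i _ => (hU i).1)
  · exact hXc.inter (convex_iInter fun i => convex_iInter fun _ => (hU i).2.1)
  · intro j
    exact ⟨(hU j).1.inter (hXo.inter (isOpen_biInter_finset fun i _ => (hU i).1)),
      ((hU j).2.1.inter (hXc.inter (convex_iInter fun i => convex_iInter fun _ => (hU i).2.1))),
      Set.inter_subset_right⟩
  · intro τ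
    constructor
    · rintro ⟨hτC, hστ⟩
      obtain ⟨x, hxX, hx⟩ := (hcode τ).1 hτC
      have hxX' : x ∈ X' := by
        refine ⟨hxX, ?_⟩
        simp only [Set.mem_iInter]
        exact fun i hi => (hx i).2 (hστ hi)
      exact ⟨x, hxX', fun i => ⟨fun h => (hx i).1 h.1, fun h => ⟨(hx i).2 h, hxX'⟩⟩⟩
    · rintro ⟨x, hxX', hx⟩
      have hxU : ∀ i, x ∈ U i ↔ i ∈ τ :=
        fun i => ⟨fun h => (hx i).1 ⟨h, hxX'⟩, fun h => ((hx i).2 h).1⟩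
      refine ⟨(hcode τ).2 ⟨x, hxX'.1, hxU⟩, fun i hi => ?_⟩
      have : x ∈ U i := by
        have := hxX'.2
        simp only [Set.mem_iInter] at this
        exact this i hi
      exact (hxU i).1 this
end
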